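/- arXiv:1312.5858 — 2 statements merged into one kernel-verified Lean document; each statement's English description precedes it below -/
import Mathlib

section
/- Let ξ : E → ℝⁿ be a linear map from a finite-dimensional real inner product space E of dimension m, and let k ≥ min(m, n). Then the Hilbert–Schmidt (Frobenius) norm of ξ equals the supremum of the Hilbert–Schmidt norms of ρ ∘ ξ over all linear maps ρ : ℝⁿ → ℝᵏ with operator norm at most 1. -/
/-! Every contraction `ρ` shrinks each `‖ξ eᵢ‖`, so `frobNorm (ρ ∘ ξ) ≤ frobNorm ξ`.
Conversely, the range of `ξ` has dimension at most `min m n ≤ k`, so it embeds isometrically into `ℝᵏ`;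
precomposing that embedding with the orthogonal projection onto the range gives a contraction
preserving every `‖ξ eᵢ‖`, at which the supremum is attained. -/

open scoped BigOperators

/-- The Hilbert–Schmidt (Frobenius) norm of a linear map from a finite-dimensional real
inner product space, computed with the standard orthonormal basis. -/
noncomputable def frobNorm {E F : Type*} [NormedAddCommGroup E] [InnerProductSpace ℝ E]
    [FiniteDimensional ℝ E] [NormedAddCommGroup F] [NormedSpace ℝ F]
    (ξ : E →ₗ[ℝ] F) : ℝ :=
  Real.sqrt (∑ i, ‖ξ (stdOrthonormalBasis ℝ E i)‖ ^ 2)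

theorem exists_linearIsometry_of_finrank_le {𝕜 V W : Type*} [RCLike 𝕜]
    [NormedAddCommGroup V] [InnerProductSpace 𝕜 V] [FiniteDimensional 𝕜 V]
    [NormedAddCommGroup W] [InnerProductSpace 𝕜 W] [FiniteDimensional 𝕜 W]
    (h : Module.finrank 𝕜 V ≤ Module.finrank 𝕜 W) : Nonempty (V →ₗᵢ[𝕜] W) := by
  let bV := stdOrthonormalBasis 𝕜 V
  let bW := stdOrthonormalBasis 𝕜 W
  let f : V →ₗ[𝕜] W := bV.toBasis.constr 𝕜 (bW ∘ Fin.castLE h)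
  have hf : f ∘ bV.toBasis = bW ∘ Fin.castLE h := by
    funext i
    simp [f]
  have hbV : Orthonormal 𝕜 bV.toBasis := by
    simpa only [OrthonormalBasis.coe_toBasis] using bV.orthonormal
  exact ⟨f.isometryOfOrthonormal hbV
    (hf ▸ bW.orthonormal.comp _ (Fin.castLE_injective h))⟩

theorem Submodule.exists_norm_le_one_and_norm_map_of_finrank_le {F W : Type*}
    [NormedAddCommGroup F] [InnerProductSpace ℝ F] (K : Submodule ℝ F) [FiniteDimensional ℝ K]
    [NormedAddCommGroup W] [InnerProductSpace ℝ W] [FiniteDimensional ℝ W]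
    (h : Module.finrank ℝ K ≤ Module.finrank ℝ W) :
    ∃ ρ : F →L[ℝ] W, ‖ρ‖ ≤ 1 ∧ ∀ x ∈ K, ‖ρ x‖ = ‖x‖ := by
  obtain ⟨φ⟩ := exists_linearIsometry_of_finrank_le h
  refine ⟨φ.toContinuousLinearMap.comp K.orthogonalProjectionOnto, ?_, fun x hx => ?_⟩
  · refine (ContinuousLinearMap.opNorm_comp_le _ _).trans ?_
    simpa using mul_le_one₀ φ.norm_toContinuousLinearMap_le (norm_nonneg _)
      K.orthogonalProjectionOnto_norm_le
  · simpa using K.norm_orthogonalProjectionOnto_apply hx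

section frobNorm

variable {E F G : Type*} [NormedAddCommGroup E] [InnerProductSpace ℝ E] [FiniteDimensional ℝ E]
  [NormedAddCommGroup F] [NormedSpace ℝ F] [NormedAddCommGroup G] [NormedSpace ℝ G]

theorem frobNorm_comp_le_of_norm_le_one (ξ : E →ₗ[ℝ] F) {ρ : F →L[ℝ] G} (hρ : ‖ρ‖ ≤ 1) :
    frobNorm ((ρ : F →ₗ[ℝ] G).comp ξ) ≤ frobNorm ξ := by
  refine Real.sqrt_le_sqrt (Finset.sum_le_sum fun i _ => ?_)
  gcongr
  exact ρ.le_of_opNorm_le hρ _ |>.trans_eq (one_mul _)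

theorem frobNorm_comp_of_norm_map (ξ : E →ₗ[ℝ] F) {ρ : F →ₗ[ℝ] G}
    (hρ : ∀ x, ‖ρ (ξ x)‖ = ‖ξ x‖) : frobNorm (ρ.comp ξ) = frobNorm ξ := by
  simp only [frobNorm, LinearMap.comp_apply, hρ]

end frobNorm

theorem stmt0 {E : Type*} [NormedAddCommGroup E] [InnerProductSpace ℝ E]
    [FiniteDimensional ℝ E] {m n k : ℕ} (hm : Module.finrank ℝ E = m)
    (hk : min m n ≤ k)
    (ξ : E →ₗ[ℝ] EuclideanSpace ℝ (Fin n)) :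
    frobNorm ξ =
      sSup {x : ℝ | ∃ ρ : EuclideanSpace ℝ (Fin n) →L[ℝ] EuclideanSpace ℝ (Fin k),
        ‖ρ‖ ≤ 1 ∧
        x = frobNorm ((ρ : EuclideanSpace ℝ (Fin n) →ₗ[ℝ] EuclideanSpace ℝ (Fin k)).comp ξ)} := by
  have hrange :
      Module.finrank ℝ (LinearMap.range ξ) ≤ Module.finrank ℝ (EuclideanSpace ℝ (Fin k)) := by
    rw [finrank_euclideanSpace_fin]
    refine le_trans (le_min ?_ ?_) hk
    · exact hm ▸ LinearMap.finrank_range_le ξ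
    · simpa using Submodule.finrank_le (LinearMap.range ξ)
  obtain ⟨ρ, hρ, hρξ⟩ :=
    (LinearMap.range ξ).exists_norm_le_one_and_norm_map_of_finrank_le hrange
  refine (IsGreatest.csSup_eq ⟨?_, ?_⟩).symm
  · exact ⟨ρ, hρ,
      (frobNorm_comp_of_norm_map ξ fun x => hρξ _ (LinearMap.mem_range_self ξ x)).symm⟩
  · rintro x ⟨σ, hσ, rfl⟩
    exact frobNorm_comp_le_of_norm_le_one ξ hσ
end

section
/- Let α > 0 and let u : ℝᵐ → ℝ be defined by u(x) = ‖x‖^{−α} for x ≠ 0 (and u(0) = 0). For every C¹ function f : ℝ → ℝ with compact support, the composition f ∘ u is weakly differentiable on ℝᵐ (i.e., f ∘ u lies in W^{1,1}_loc(ℝᵐ)). -/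
/-! Since `f` vanishes on `[R, ∞)` and `‖x‖ ^ (-α) → ∞` as `x → 0`, the function `f ∘ u` vanishes
on a punctured ball around the singularity. Off the null set `{0}` it therefore agrees with the
`C¹` function `G` equal to `f (‖x‖ ^ (-α))` for `x ≠ 0` and to `0` at `0`, and integration by
parts for `G` shows that `∇ G` is a weak gradient of `f ∘ u`. -/
open MeasureTheory Filter Topology InnerProductSpace Function
open scoped Gradient

section Gradient

variable {E : Type*} [NormedAddCommGroup E] [InnerProductSpace ℝ E] [CompleteSpace E] {f : E → ℝ}

theorem ContDiff.continuous_gradient (hf : ContDiff ℝ 1 f) : Continuous (∇ f) :=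
  (toDual ℝ E).symm.continuous.comp (hf.continuous_fderiv one_ne_zero)

theorem HasCompactSupport.gradient (hf : HasCompactSupport f) : HasCompactSupport (∇ f) :=
  (hf.fderiv ℝ).comp_left (map_zero (toDual ℝ E).symm)

end Gradient

section WeakGradient

variable {E : Type*} [NormedAddCommGroup E] [InnerProductSpace ℝ E] [CompleteSpace E]
  [MeasurableSpace E] {μ : Measure E}

def IsWeakGradient (μ : Measure E) (w : E → ℝ) (g : E → E) : Prop :=
  ∀ φ : E → ℝ, ContDiff ℝ 1 φ → HasCompactSupport φ → ∫ x, w x • ∇ φ x ∂μ = -∫ x, φ x • g x ∂μ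

theorem IsWeakGradient.congr_ae {w w' : E → ℝ} {g : E → E} (h : IsWeakGradient μ w g)
    (hw : w =ᵐ[μ] w') : IsWeakGradient μ w' g := fun φ hφ hφc => by
  rw [← h φ hφ hφc]
  exact integral_congr_ae (hw.symm.mono fun x hx => congrArg (· • ∇ φ x) hx)

theorem isWeakGradient_gradient [FiniteDimensional ℝ E] [BorelSpace E] [μ.IsAddHaarMeasure]
    {G : E → ℝ} (hG : ContDiff ℝ 1 G) : IsWeakGradient μ G (∇ G) := fun φ hφ hφc => by
  have hφ' : Continuous fun x => fderiv ℝ φ x := hφ.continuous_fderiv one_ne_zero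
  have hG' : Continuous fun x => fderiv ℝ G x := hG.continuous_fderiv one_ne_zero
  have hGφ : Integrable (fun x => G x • ∇ φ x) μ :=
    (hG.continuous.smul hφ.continuous_gradient).integrable_of_hasCompactSupport
      hφc.gradient.smul_left
  have hφG : Integrable (fun x => φ x • ∇ G x) μ :=
    (hφ.continuous.smul hG.continuous_gradient).integrable_of_hasCompactSupport hφc.smul_right
  -- Pairing with a fixed `v` reduces the claim to scalar integration by parts in direction `v`.
  refine ext_inner_left ℝ fun v => ?_
  rw [← integral_inner hGφ v, inner_neg_right, ← integral_inner hφG v]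
  simp only [real_inner_smul_right, inner_gradient_right, conj_trivial]
  rw [integral_mul_fderiv_eq_neg_fderiv_mul_of_integrable
    (((hG'.clm_apply continuous_const).mul hφ.continuous).integrable_of_hasCompactSupport
      hφc.mul_left)
    ((hG.continuous.mul (hφ'.clm_apply continuous_const)).integrable_of_hasCompactSupport
      (hφc.fderiv_apply ℝ v).mul_left)
    ((hG.continuous.mul hφ.continuous).integrable_of_hasCompactSupport hφc.mul_left)
    (fun x _ => hG.differentiable one_ne_zero x) (fun x _ => hφ.differentiable one_ne_zero x)]
  simp only [mul_comm]

end WeakGradient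

theorem HasCompactSupport.comp_eventuallyEq_zero_of_tendsto_atTop {M : Type*} [Zero M]
    {f : ℝ → M} (hf : HasCompactSupport f) {ι : Type*} {l : Filter ι} {g : ι → ℝ}
    (hg : Tendsto g l atTop) : (fun x => f (g x)) =ᶠ[l] 0 := by
  obtain ⟨R, hR⟩ := hf.isCompact.bddAbove
  filter_upwards [hg.eventually_gt_atTop R] with x hx
  show f (g x) = 0
  exact image_eq_zero_of_notMem_tsupport fun hx' => (hR hx').not_gt hx

theorem contDiff_update_of_eventuallyEq_zero {𝕜 E F : Type*} [NontriviallyNormedField 𝕜]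
    [NormedAddCommGroup E] [NormedSpace 𝕜 E] [NormedAddCommGroup F] [NormedSpace 𝕜 F]
    [DecidableEq E] {n : WithTop ℕ∞} {h : E → F} {a : E}
    (hh : ∀ x ≠ a, ContDiffAt 𝕜 n h x) (ha : h =ᶠ[𝓝[≠] a] 0) : ContDiff 𝕜 n (update h a 0) := by
  refine contDiff_iff_contDiffAt.2 fun x => ?_
  rcases eq_or_ne x a with rfl | hx
  · refine (contDiffAt_const (c := (0 : F))).congr_of_eventuallyEq ?_
    filter_upwards [eventually_nhdsWithin_iff.1 ha] with y hy
    rcases eq_or_ne y x with rfl | hyx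
    · simp
    · simp [update_of_ne hyx, hy hyx]
  · refine (hh x hx).congr_of_eventuallyEq ?_
    filter_upwards [eventually_ne_nhds hx] with y hy using update_of_ne hy _ _

section PowerSingularity

variable {E : Type*} [NormedAddCommGroup E] {α : ℝ}

theorem tendsto_rpow_neg_norm_nhdsNE_zero (hα : 0 < α) :
    Tendsto (fun x : E => ‖x‖ ^ (-α)) (𝓝[≠] 0) atTop :=
  (tendsto_rpow_neg_nhdsGT_zero (neg_neg_iff_pos.2 hα)).comp tendsto_norm_nhdsNE_zero

theorem contDiff_update_comp_rpow_neg_norm [InnerProductSpace ℝ E] [DecidableEq E] (hα : 0 < α)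
    {f : ℝ → ℝ} {n : WithTop ℕ∞} (hf : ContDiff ℝ n f) (hfc : HasCompactSupport f) :
    ContDiff ℝ n (update (fun x : E => f (‖x‖ ^ (-α))) 0 0) :=
  contDiff_update_of_eventuallyEq_zero
    (fun x hx => hf.contDiffAt.comp x
      ((Real.contDiffAt_rpow_const_of_ne (norm_ne_zero_iff.2 hx)).comp x (contDiffAt_norm ℝ hx)))
    (hfc.comp_eventuallyEq_zero_of_tendsto_atTop (tendsto_rpow_neg_norm_nhdsNE_zero hα))

end PowerSingularity

theorem stmt4_general {m : ℕ} (hm : 1 ≤ m) (α : ℝ) (hα : 0 < α)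
    (u : EuclideanSpace ℝ (Fin m) → ℝ)
    (hu : ∀ x : EuclideanSpace ℝ (Fin m), x ≠ 0 → u x = ‖x‖ ^ (-α))
    (f : ℝ → ℝ) (hf : ContDiff ℝ 1 f) (hfc : HasCompactSupport f) :
    LocallyIntegrable (fun x => f (u x)) volume ∧
    ∃ g : EuclideanSpace ℝ (Fin m) → EuclideanSpace ℝ (Fin m),
      LocallyIntegrable g volume ∧
      ∀ φ : EuclideanSpace ℝ (Fin m) → ℝ, ContDiff ℝ 1 φ → HasCompactSupport φ →
        ∫ x, f (u x) • gradient φ x = - ∫ x, φ x • g x := by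
  -- In positive dimension Lebesgue measure has no atoms, so `{0}` is null.
  have : Nonempty (Fin m) := ⟨⟨0, hm⟩⟩
  set G := update (fun x : EuclideanSpace ℝ (Fin m) => f (‖x‖ ^ (-α))) 0 0
  have hG : ContDiff ℝ 1 G := contDiff_update_comp_rpow_neg_norm hα hf hfc
  have hGu : G =ᵐ[volume] fun x => f (u x) := by
    filter_upwards [compl_mem_ae_iff.2 (measure_singleton 0)] with x hx
    rw [show G x = f (‖x‖ ^ (-α)) from update_of_ne hx _ _, hu x hx]
  exact ⟨hG.continuous.locallyIntegrable.congr hGu, ∇ G, hG.continuous_gradient.locallyIntegrable,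
    (isWeakGradient_gradient hG).congr_ae hGu⟩

theorem stmt4 {m : ℕ} (hm : 1 ≤ m) (α : ℝ) (hα : 0 < α)
    (u : EuclideanSpace ℝ (Fin m) → ℝ)
    (hu : ∀ x : EuclideanSpace ℝ (Fin m), x ≠ 0 → u x = ‖x‖ ^ (-α)) (hu0 : u 0 = 0)
    (f : ℝ → ℝ) (hf : ContDiff ℝ 1 f) (hfc : HasCompactSupport f) :
    LocallyIntegrable (fun x => f (u x)) volume ∧
    ∃ g : EuclideanSpace ℝ (Fin m) → EuclideanSpace ℝ (Fin m),
      LocallyIntegrable g volume ∧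
      ∀ φ : EuclideanSpace ℝ (Fin m) → ℝ, ContDiff ℝ 1 φ → HasCompactSupport φ →
        ∫ x, f (u x) • gradient φ x = - ∫ x, φ x • g x :=
  stmt4_general hm α hα u hu f hf hfc
end
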